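/- arXiv:math/0607002 — 4 statements merged into one kernel-verified Lean document; each statement's English description precedes it below -/
import Mathlib

section
/- Let H be a complex Hilbert space and J an anti-linear bijective map from H to H. Suppose that every continuous linear operator A in a set S of bounded operators on H satisfies A* = J A J⁻¹ (where A* is the adjoint), and that S is closed under adjoints and composition. Then any two elements A, B of S commute: A B = B A. -/
/-- Let `H` be a complex Hilbert space and `J` an anti-linear bijective map from `H` to `H`.
If every operator `A` in a set `S` of bounded operators satisfies `A* = J A J⁻¹`, and `S` is
closed under adjoints and composition, then any two elements of `S` commute. -/
theorem stmt0 {H : Type*} [NormedAddCommGroup H] [InnerProductSpace ℂ H] [CompleteSpace H]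
    (J : H ≃ₛₗ[starRingEnd ℂ] H)
    (S : Set (H →L[ℂ] H))
    (hadj : ∀ A ∈ S, ∀ x : H, ContinuousLinearMap.adjoint A x = J (A (J.symm x)))
    (hstar : ∀ A ∈ S, ContinuousLinearMap.adjoint A ∈ S)
    (hcomp : ∀ A ∈ S, ∀ B ∈ S, A.comp B ∈ S)
    (A B : H →L[ℂ] H) (hA : A ∈ S) (hB : B ∈ S) :
    A.comp B = B.comp A := by
  ext y
  have h1 := hadj _ (hcomp A hA B hB) (J y)
  have h2 : ContinuousLinearMap.adjoint (A.comp B) (J y)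
      = ContinuousLinearMap.adjoint B (ContinuousLinearMap.adjoint A (J y)) := by
    rw [ContinuousLinearMap.adjoint_comp]; rfl
  rw [h2, hadj A hA, hadj B hB, J.symm_apply_apply, J.symm_apply_apply] at h1
  simpa using J.injective h1.symm
end

section
/- For the holomorphic discrete series π of Sp(2,ℝ) with Blattner parameter μ = (μ₁, μ₂) (μ₁ ≥ μ₂), the multiplicity n_μ(p,q) of the U(2)-type with highest weight (p,q) equals the number of triples (a,b,c) ∈ ℕ³ with a ≥ b ≥ 0 such that p + q = μ₁ + μ₂ + 2a + 2b and max(2a + μ₂, 2b + μ₁) ≤ p ≤ 2a + μ₁; this number is bounded above by ⌊(μ₁ - μ₂ + 2)/2⌋ for all (p,q). -/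
/-- The `K`-type multiplicity of the holomorphic discrete series of `Sp(2,ℝ)` with Blattner
parameter `(μ₁, μ₂)`:  `n_μ(p,q)` counts pairs `(a,b) ∈ ℕ²` with `a ≥ b`,
`p+q = μ₁+μ₂+2a+2b` and `max(2a+μ₂, 2b+μ₁) ≤ p ≤ 2a+μ₁`.  It is bounded by
`⌊(μ₁-μ₂+2)/2⌋`, and this bound is attained. -/
theorem stmt3 (μ₁ μ₂ : ℤ) (hμ : μ₂ ≤ μ₁) :
    (∀ p q : ℤ,
      (({ab : ℕ × ℕ | ab.2 ≤ ab.1 ∧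
          p + q = μ₁ + μ₂ + 2 * (ab.1 : ℤ) + 2 * (ab.2 : ℤ) ∧
          max (2 * (ab.1 : ℤ) + μ₂) (2 * (ab.2 : ℤ) + μ₁) ≤ p ∧
          p ≤ 2 * (ab.1 : ℤ) + μ₁}.ncard : ℤ) ≤ (μ₁ - μ₂ + 2) / 2)) ∧
    (∃ p q : ℤ,
      (({ab : ℕ × ℕ | ab.2 ≤ ab.1 ∧
          p + q = μ₁ + μ₂ + 2 * (ab.1 : ℤ) + 2 * (ab.2 : ℤ) ∧
          max (2 * (ab.1 : ℤ) + μ₂) (2 * (ab.2 : ℤ) + μ₁) ≤ p ∧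
          p ≤ 2 * (ab.1 : ℤ) + μ₁}.ncard : ℤ) = (μ₁ - μ₂ + 2) / 2)) := by
  constructor
  · intro p q
    set S : Set (ℕ × ℕ) := {ab : ℕ × ℕ | ab.2 ≤ ab.1 ∧
          p + q = μ₁ + μ₂ + 2 * (ab.1 : ℤ) + 2 * (ab.2 : ℤ) ∧
          max (2 * (ab.1 : ℤ) + μ₂) (2 * (ab.2 : ℤ) + μ₁) ≤ p ∧
          p ≤ 2 * (ab.1 : ℤ) + μ₁} with hS
    have hinj : Set.InjOn (fun ab : ℕ × ℕ => (ab.1 : ℤ)) S := by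
      rintro ⟨a, b⟩ ⟨_, h2, _, _⟩ ⟨a', b'⟩ ⟨_, h2', _, _⟩ h
      simp only at h h2 h2' ⊢
      have ha : a = a' := by exact_mod_cast h
      subst ha
      have hb : b = b' := by omega
      simp [hb]
    have himg : (fun ab : ℕ × ℕ => (ab.1 : ℤ)) '' S ⊆
        ↑(Finset.Icc ((p - μ₁ + 1) / 2) ((p - μ₂) / 2)) := by
      rintro x ⟨⟨a, b⟩, ⟨h1, h2, h3, h4⟩, rfl⟩
      obtain ⟨h3a, h3b⟩ := max_le_iff.mp h3
      simp only [Finset.coe_Icc, Set.mem_Icc]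
      omega
    calc (S.ncard : ℤ)
        = (((fun ab : ℕ × ℕ => (ab.1 : ℤ)) '' S).ncard : ℤ) := by
          rw [Set.ncard_image_of_injOn hinj]
      _ ≤ ((Finset.Icc ((p - μ₁ + 1) / 2) ((p - μ₂) / 2)).card : ℤ) := by
          have := Set.ncard_le_ncard himg (Finset.finite_toSet _)
          rw [Set.ncard_coe_finset] at this
          exact_mod_cast this
      _ ≤ (μ₁ - μ₂ + 2) / 2 := by
          rw [Int.card_Icc]
          omega
  · refine ⟨3 * μ₁ - 2 * μ₂, 2 * μ₁ - μ₂, ?_⟩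
    set n : ℕ := (μ₁ - μ₂).toNat with hn
    have hset : {ab : ℕ × ℕ | ab.2 ≤ ab.1 ∧
          (3 * μ₁ - 2 * μ₂) + (2 * μ₁ - μ₂) = μ₁ + μ₂ + 2 * (ab.1 : ℤ) + 2 * (ab.2 : ℤ) ∧
          max (2 * (ab.1 : ℤ) + μ₂) (2 * (ab.2 : ℤ) + μ₁) ≤ (3 * μ₁ - 2 * μ₂) ∧
          (3 * μ₁ - 2 * μ₂) ≤ 2 * (ab.1 : ℤ) + μ₁} =
        ↑((Finset.Icc n (n + n / 2)).image fun a => (a, 2 * n - a)) := by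
      ext ⟨a, b⟩
      simp only [Set.mem_setOf_eq, Finset.coe_image, Set.mem_image, Finset.mem_coe,
        Finset.mem_Icc, max_le_iff, Prod.mk.injEq]
      constructor
      · rintro ⟨h1, h2, ⟨h3, h4⟩, h5⟩
        exact ⟨a, by omega, rfl, by omega⟩
      · rintro ⟨x, hx, rfl, rfl⟩
        refine ⟨by omega, by omega, ⟨by omega, by omega⟩, by omega⟩
    rw [hset, Set.ncard_coe_finset,
      Finset.card_image_of_injective _ (fun x y h => (Prod.mk.injEq _ _ _ _).mp h |>.1),
      Nat.card_Icc]
    omega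
end

section
/- Fix integers μ₁ > μ₂ (corresponding to a non-holomorphic discrete series W_λ of Sp(2,ℝ)). For integers p, q with p ≥ μ₁, p - q ≥ μ₁ - μ₂ and p - q ≡ μ₁ + μ₂ (mod 2), the number of triples (a,b,c) ∈ ℕ³ with p = 2a + b + μ₁ and q = b - 2c + μ₂ equals 1 + min(⌊(p-μ₁)/2⌋, (p-q-μ₁+μ₂)/2). In particular, this count is unbounded as (p,q) varies. -/
/-- `K`-type multiplicities of the non-holomorphic discrete series `W_λ` of `Sp(2,ℝ)`:
for integers `p ≥ μ₁`, `p - q ≥ μ₁ - μ₂` with `p - q ≡ μ₁ + μ₂ (mod 2)`, the number of triples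
`(a,b,c) ∈ ℕ³` with `p = 2a + b + μ₁` and `q = b - 2c + μ₂` equals
`1 + min(⌊(p-μ₁)/2⌋, (p-q-μ₁+μ₂)/2)`; in particular this count is unbounded. -/
theorem stmt4 (μ₁ μ₂ : ℤ) (hμ : μ₂ < μ₁) :
    (∀ p q : ℤ, μ₁ ≤ p → μ₁ - μ₂ ≤ p - q → (2 : ℤ) ∣ (p - q - μ₁ - μ₂) →
      (({t : ℕ × ℕ × ℕ | p = 2 * (t.1 : ℤ) + (t.2.1 : ℤ) + μ₁ ∧
          q = (t.2.1 : ℤ) - 2 * (t.2.2 : ℤ) + μ₂}.ncard : ℤ)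
        = 1 + min ((p - μ₁) / 2) ((p - q - μ₁ + μ₂) / 2))) ∧
    (∀ N : ℕ, ∃ p q : ℤ, μ₁ ≤ p ∧ μ₁ - μ₂ ≤ p - q ∧ (2 : ℤ) ∣ (p - q - μ₁ - μ₂) ∧
      (N : ℤ) ≤ ({t : ℕ × ℕ × ℕ | p = 2 * (t.1 : ℤ) + (t.2.1 : ℤ) + μ₁ ∧
          q = (t.2.1 : ℤ) - 2 * (t.2.2 : ℤ) + μ₂}.ncard : ℤ)) := by
  have key : ∀ p q : ℤ, μ₁ ≤ p → μ₁ - μ₂ ≤ p - q → (2 : ℤ) ∣ (p - q - μ₁ - μ₂) →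
      (({t : ℕ × ℕ × ℕ | p = 2 * (t.1 : ℤ) + (t.2.1 : ℤ) + μ₁ ∧
          q = (t.2.1 : ℤ) - 2 * (t.2.2 : ℤ) + μ₂}.ncard : ℤ)
        = 1 + min ((p - μ₁) / 2) ((p - q - μ₁ + μ₂) / 2)) := by
    intro p q hp hpq hdvd
    set x : ℤ := p - μ₁ with hx
    set y : ℤ := q - μ₂ with hy
    have hx0 : 0 ≤ x := by omega
    have hxy0 : 0 ≤ x - y := by omega
    have hdvd' : (2 : ℤ) ∣ (x - y) := by
      obtain ⟨k, hk⟩ := hdvd; exact ⟨k + μ₂, by omega⟩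
    obtain ⟨k, hk⟩ := hdvd'
    have hk0 : 0 ≤ k := by omega
    have hhalf : (x - y) / 2 = k := by omega
    set M : ℤ := min (x / 2) k with hM
    have hM0 : 0 ≤ M := le_min (by positivity) hk0
    set m : ℕ := M.toNat with hm
    have hmM : (m : ℤ) = M := Int.toNat_of_nonneg hM0
    have hx2 : 2 * (x / 2) ≤ x := by omega
    set f : ℕ → ℕ × ℕ × ℕ := fun a => (a, (x - 2 * a).toNat, (k - a).toNat) with hf
    have hset : {t : ℕ × ℕ × ℕ | p = 2 * (t.1 : ℤ) + (t.2.1 : ℤ) + μ₁ ∧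
          q = (t.2.1 : ℤ) - 2 * (t.2.2 : ℤ) + μ₂} = f '' Set.Iic m := by
      ext t
      simp only [Set.mem_setOf_eq, Set.mem_image, Set.mem_Iic]
      constructor
      · rintro ⟨h1, h2⟩
        refine ⟨t.1, by omega, ?_⟩
        have hb : ((x - 2 * t.1).toNat : ℤ) = (t.2.1 : ℤ) := by
          rw [Int.toNat_of_nonneg (by omega)]; omega
        have hc : ((k - (t.1:ℤ)).toNat : ℤ) = (t.2.2 : ℤ) := by
          rw [Int.toNat_of_nonneg (by omega)]; omega
        simp only [hf]
        exact Prod.ext rfl (Prod.ext (by exact_mod_cast hb) (by exact_mod_cast hc))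
      · rintro ⟨a', ha', rfl⟩
        have haM : (a' : ℤ) ≤ M := by rw [← hmM]; exact_mod_cast ha'
        have h1 : ((x - 2 * a').toNat : ℤ) = x - 2 * a' :=
          Int.toNat_of_nonneg (by omega)
        have h2 : ((k - (a':ℤ)).toNat : ℤ) = k - a' := Int.toNat_of_nonneg (by omega)
        simp only [hf]
        constructor
        · push_cast [h1]; omega
        · push_cast [h1, h2]; omega
    have hinj : Function.Injective f := fun a a' h => by
      simpa [hf] using congrArg Prod.fst h
    rw [hset, Set.ncard_image_of_injective _ hinj]
    have : Set.Iic m = ↑(Finset.Iic m) := by simp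
    rw [this, Set.ncard_coe_finset, Nat.card_Iic]
    push_cast
    omega
  refine ⟨key, fun N => ?_⟩
  refine ⟨μ₁ + 2 * N, μ₂, by omega, by omega, ⟨N - μ₂, by ring⟩, ?_⟩
  rw [key (μ₁ + 2 * N) μ₂ (by omega) (by omega) ⟨N - μ₂, by ring⟩]
  have h1 : (μ₁ + 2 * (N:ℤ) - μ₁) / 2 = N := by omega
  have h2 : (μ₁ + 2 * (N:ℤ) - μ₂ - μ₁ + μ₂) / 2 = N := by omega
  rw [h1, h2]
  omega
end

section
/- For any two points z, w in the open unit disk D ⊂ ℂ, there exists a holomorphic automorphism T of D (a linear fractional transformation preserving D) such that T(z) = conj(z) and T(w) = conj(w). -/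
/-!
Let `φ_z(u) = (u - z) / (1 - conj z * u)`. Since `φ_{conj z}(conj w) = conj (φ_z w)`, the two
points `φ_z w` and `φ_{conj z} (conj w)` have the same modulus, so a rotation `u ↦ c * u` carries
one to the other, and `T = φ_{conj z}⁻¹ ∘ (c • ·) ∘ φ_z` works. Multiplying out the three
matrices gives `T u = (A * u + B) / (c * (conj A + conj B * u))` with `A = c - conj z ^ 2` and
`B = conj z - c * z`; since `‖A‖² - ‖B‖² = (1 - ‖z‖²)² > 0`, this is a disk automorphism in
normal form, with `a = -B / A`.
-/

open Complex ComplexConjugate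

lemma exists_norm_eq_one_mul_eq_conj (v : ℂ) : ∃ c : ℂ, ‖c‖ = 1 ∧ c * v = conj v := by
  rcases eq_or_ne v 0 with rfl | hv
  · exact ⟨1, norm_one, by simp⟩
  · refine ⟨conj v / v, ?_, div_mul_cancel₀ _ hv⟩
    rw [norm_div, norm_conj, div_self (norm_ne_zero_iff.mpr hv)]

lemma conj_add_conj_mul_ne_zero {A B u : ℂ} (hBA : ‖B‖ < ‖A‖) (hu : ‖u‖ ≤ 1) :
    conj A + conj B * u ≠ 0 := by
  intro h
  have hnorm : ‖A‖ = ‖B‖ * ‖u‖ := by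
    rw [← norm_conj A, eq_neg_of_add_eq_zero_left h, norm_neg, norm_mul, norm_conj]
  nlinarith [norm_nonneg B]

lemma exists_diskAut_apply_eq_iff {A B μ : ℂ} (hBA : ‖B‖ < ‖A‖) (hμ : ‖μ‖ = 1) :
    ∃ (θ : ℝ) (a : ℂ), ‖a‖ < 1 ∧ ∀ u v : ℂ, ‖u‖ ≤ 1 →
      (exp (θ * I) * (u - a) / (1 - conj a * u) = v ↔
        A * u + B = μ * v * (conj A + conj B * u)) := by
  have hA : A ≠ 0 := norm_pos_iff.mp ((norm_nonneg B).trans_lt hBA)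
  have hμ0 : μ ≠ 0 := norm_ne_zero_iff.mp (by rw [hμ]; exact one_ne_zero)
  have hcA : conj A ≠ 0 := (map_ne_zero _).mpr hA
  have hlam : exp (arg (A / (μ * conj A)) * I) = A / (μ * conj A) := by
    have hnorm : ‖A / (μ * conj A)‖ = 1 := by
      rw [norm_div, norm_mul, norm_conj, hμ, one_mul, div_self (norm_ne_zero_iff.mpr hA)]
    have h := norm_mul_exp_arg_mul_I (A / (μ * conj A))
    rwa [hnorm, ofReal_one, one_mul] at h
  refine ⟨arg (A / (μ * conj A)), -B / A, ?_, fun u v hu => ?_⟩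
  · rwa [norm_div, norm_neg, div_lt_one ((norm_nonneg B).trans_lt hBA)]
  · have hden := conj_add_conj_mul_ne_zero hBA hu
    have hT : exp (arg (A / (μ * conj A)) * I) * (u - -B / A) / (1 - conj (-B / A) * u) =
        (A * u + B) / (μ * (conj A + conj B * u)) := by
      rw [hlam, map_div₀, map_neg]
      field_simp
      ring
    rw [hT, div_eq_iff (mul_ne_zero hμ0 hden), ← mul_assoc, mul_comm v μ]

lemma norm_conj_sub_mul_lt_norm_sub_conj_sq {z c : ℂ} (hz : ‖z‖ < 1) (hc : ‖c‖ = 1) :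
    ‖conj z - c * z‖ < ‖c - conj z ^ 2‖ := by
  have key : ‖c - conj z ^ 2‖ ^ 2 = ‖conj z - c * z‖ ^ 2 + (1 - ‖z‖ ^ 2) ^ 2 := by
    have hcc := mul_conj' c
    have hzz := mul_conj' z
    rw [hc, ofReal_one, one_pow] at hcc
    apply ofReal_injective
    push_cast
    rw [← mul_conj', ← mul_conj', ← hzz]
    simp only [map_sub, map_mul, map_pow, conj_conj]
    linear_combination (1 - z * conj z) * hcc
  have hpos : 0 < (1 - ‖z‖ ^ 2) ^ 2 := by
    have : ‖z‖ ^ 2 < 1 := pow_lt_one₀ (norm_nonneg z) hz two_ne_zero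
    positivity
  exact lt_of_pow_lt_pow_left₀ 2 (norm_nonneg _) (by linarith)

/-- For any two points `z, w` of the open unit disk there is a holomorphic automorphism
`T(u) = e^{iθ}(u - a)/(1 - conj(a)·u)` (with `|a| < 1`, `θ ∈ ℝ`) of the disk such that
`T(z) = conj z` and `T(w) = conj w`. -/
theorem stmt12 :
    ∀ z w : ℂ, ‖z‖ < 1 → ‖w‖ < 1 →
      ∃ (θ : ℝ) (a : ℂ), ‖a‖ < 1 ∧
        Complex.exp ((θ : ℂ) * Complex.I) * (z - a) / (1 - (starRingEnd ℂ) a * z)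
          = (starRingEnd ℂ) z ∧
        Complex.exp ((θ : ℂ) * Complex.I) * (w - a) / (1 - (starRingEnd ℂ) a * w)
          = (starRingEnd ℂ) w := by
  intro z w hz hw
  obtain ⟨c, hc, hcw⟩ := exists_norm_eq_one_mul_eq_conj ((w - z) * (1 - z * conj w))
  have hcc : c * conj c = 1 := by rw [mul_conj', hc]; norm_num
  obtain ⟨θ, a, ha, hT⟩ :=
    exists_diskAut_apply_eq_iff (norm_conj_sub_mul_lt_norm_sub_conj_sq hz hc) hc
  refine ⟨θ, a, ha, (hT z _ hz.le).2 ?_, (hT w _ hw.le).2 ?_⟩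
  · simp only [map_sub, map_mul, map_pow, conj_conj]
    linear_combination (-(conj z * (1 - conj z * z))) * hcc
  · simp only [map_sub, map_mul, map_pow, map_one, conj_conj] at hcw ⊢
    linear_combination hcw - conj w * (1 - conj z * w) * hcc
end
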